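/- arXiv:2302.02190 — 8 statements merged into one kernel-verified Lean document; each statement's English description precedes it below -/
import Mathlib

section
/- If f is a polynomial over a field F in variables x_1,...,x_n, with total degree equal to d_1+...+d_n for nonnegative integers d_i, and the coefficient of the monomial x_1^{d_1}···x_n^{d_n} in f is nonzero, then for any sets L_1,...,L_n ⊆ F with |L_i| = d_i + 1, there exists a point t ∈ L_1 × ... × L_n with f(t) ≠ 0. -/
open Finset MvPolynomial

/-- Out-degree of `v` in the digraph with arc set `S`. -/
def outDeg {α : Type*} [DecidableEq α] (S : Finset (α × α)) (v : α) : ℕ :=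
  (S.filter fun p => p.1 = v).card

/-- In-degree of `v` in the digraph with arc set `S`. -/
def inDeg {α : Type*} [DecidableEq α] (S : Finset (α × α)) (v : α) : ℕ :=
  (S.filter fun p => p.2 = v).card

/-- A digraph (arc set) is Eulerian if every vertex has equal in- and out-degree. -/
def IsEulerian {α : Type*} [DecidableEq α] (S : Finset (α × α)) : Prop :=
  ∀ v, outDeg S v = inDeg S v

instance {α : Type*} [DecidableEq α] [Fintype α] (S : Finset (α × α)) :
    Decidable (IsEulerian S) := by
  unfold IsEulerian; infer_instance

/-- Number of spanning Eulerian subdigraphs of `H` with an even number of edges. -/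
def EE {α : Type*} [DecidableEq α] [Fintype α] (H : Finset (α × α)) : ℕ :=
  (H.powerset.filter fun S => IsEulerian S ∧ Even S.card).card

/-- Number of spanning Eulerian subdigraphs of `H` with an odd number of edges. -/
def EO {α : Type*} [DecidableEq α] [Fintype α] (H : Finset (α × α)) : ℕ :=
  (H.powerset.filter fun S => IsEulerian S ∧ Odd S.card).card

/-- A digraph `H` contains a directed cycle of length `n`. -/
def HasDicycleLen {α : Type*} (H : Finset (α × α)) (n : ℕ) : Prop :=
  0 < n ∧ ∃ c : ZMod n → α, Function.Injective c ∧ ∀ i, (c i, c (i + 1)) ∈ H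

/-- `A` is an orientation of the simple graph `G`. -/
def IsOrientation {V : Type*} (G : SimpleGraph V) (A : Finset (V × V)) : Prop :=
  (∀ v w, G.Adj v w ↔ ((v, w) ∈ A ∨ (w, v) ∈ A)) ∧
  (∀ v w, (v, w) ∈ A → (w, v) ∉ A)

/-- Neighborhood `N_D(v)` in the digraph with arc set `A` (neighbors in either direction). -/
def nbr {V : Type*} [Fintype V] [DecidableEq V] (A : Finset (V × V)) (v : V) : Finset V :=
  Finset.univ.filter fun x => (v, x) ∈ A ∨ (x, v) ∈ A

/-- Closed neighborhood `N_D[v]`. -/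
def nbrC {V : Type*} [Fintype V] [DecidableEq V] (A : Finset (V × V)) (v : V) : Finset V :=
  insert v (nbr A v)

/-- Vertex type of `W(D)`: starred vertices `x*`, sector vertices `x^{vw}`,
and middle vertices `y^{vw}_x`. -/
abbrev WV (V : Type*) := V ⊕ ((V × V) × V) ⊕ ((V × V) × V)


instance {V : Type*} [DecidableEq V] : DecidableEq (WV V) :=
  inferInstanceAs (DecidableEq (V ⊕ ((V × V) × V) ⊕ ((V × V) × V)))

instance {V : Type*} [Fintype V] [DecidableEq V] : Fintype (WV V) :=
  inferInstanceAs (Fintype (V ⊕ ((V × V) × V) ⊕ ((V × V) × V)))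

/-- The starred vertex `x*`. -/
def vstar {V : Type*} (x : V) : WV V := Sum.inl x

/-- The sector vertex `x^{vw}` (for `e = (v,w)`). -/
def vsec {V : Type*} (e : V × V) (x : V) : WV V := Sum.inr (Sum.inl (e, x))

/-- The middle vertex `y^{vw}_x` (for `e = (v,w)`). -/
def vmid {V : Type*} (e : V × V) (x : V) : WV V := Sum.inr (Sum.inr (e, x))

/-- The set `N_D[v] △ N_D(w)` of possible endpoints of γ-paths through the `vw`-sector. -/
def gammaEnds {V : Type*} [Fintype V] [DecidableEq V] (A : Finset (V × V)) (e : V × V) :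
    Finset V :=
  (nbrC A e.1 ∪ nbr A e.2) \ (nbrC A e.1 ∩ nbr A e.2)

/-- The arc set of the digraph `W(D)` built from the digraph with arc set `A`. -/
def WArcSet {V : Type*} [Fintype V] [DecidableEq V] (A : Finset (V × V)) :
    Finset (WV V × WV V) :=
  (A.image fun e => (vstar e.1, vsec e e.1)) ∪
  (A.biUnion fun e => (nbr A e.1 \ nbr A e.2).image fun x => (vsec e e.1, vsec e x)) ∪
  (A.biUnion fun e => (nbr A e.2 \ nbrC A e.1).image fun x => (vsec e e.1, vmid e x)) ∪
  (A.biUnion fun e => (nbr A e.2 \ nbrC A e.1).image fun x => (vmid e x, vsec e x)) ∪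
  (A.biUnion fun e => (gammaEnds A e).image fun x => (vsec e x, vstar x))

/-- The γ-path `P(v,w;x)` from `v*` through the `vw`-sector to `x*`, as a set of arcs. -/
def gammaPath {V : Type*} [Fintype V] [DecidableEq V] (A : Finset (V × V)) (e : V × V)
    (x : V) : Finset (WV V × WV V) :=
  if x ∈ nbr A e.2 \ nbrC A e.1 then
    {(vstar e.1, vsec e e.1), (vsec e e.1, vmid e x), (vmid e x, vsec e x), (vsec e x, vstar x)}
  else
    {(vstar e.1, vsec e e.1), (vsec e e.1, vsec e x), (vsec e x, vstar x)}

/-- `ℓ` is an additive coloring of `G`. -/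
def IsAdditiveColoring {V : Type*} [Fintype V] [DecidableEq V] (G : SimpleGraph V)
    [DecidableRel G.Adj] (ℓ : V → ℕ) : Prop :=
  ∀ v w, G.Adj v w →
    ∑ u ∈ G.neighborFinset v, ℓ u ≠ ∑ u ∈ G.neighborFinset w, ℓ u

/-- Combinatorial Nullstellensatz (Alon). -/
theorem combinatorial_nullstellensatz {F : Type*} [Field F] {n : ℕ}
    (f : MvPolynomial (Fin n) F) (d : Fin n →₀ ℕ)
    (hdeg : f.totalDegree = ∑ i, d i)
    (hcoeff : f.coeff d ≠ 0)
    (L : Fin n → Finset F) (hL : ∀ i, (L i).card = d i + 1) :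
    ∃ t : Fin n → F, (∀ i, t i ∈ L i) ∧ MvPolynomial.eval t f ≠ 0 :=
  MvPolynomial.combinatorial_nullstellensatz_exists_eval_nonzero f d hcoeff
    (hdeg.trans (Finsupp.degree_eq_sum d).symm) L fun i => (hL i).symm ▸ Nat.lt_succ_self _
end

section
/- Let D be an orientation of a finite simple graph G, and define the polynomial f = ∏_{(v,w) ∈ E(D)} (x_v − x_w) over the reals. Then the coefficient of ∏_{v ∈ V(D)} x_v^{d⁺_D(v)} in f equals EE(D) − EO(D), where EE(D) (resp. EO(D)) is the number of spanning Eulerian subdigraphs of D with an even (resp. odd) number of edges. -/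
open Finset MvPolynomial

/-!
Write each factor as `x_v - x_w = -x_w + x_v` and expand: the terms are indexed by the
subsets `S ⊆ E(D)` of arcs contributing `-x_w`, and the term of `S` is
`(-1)^|S| ∏_v x_v^{d⁻_S(v) + d⁺_{D-S}(v)}`. Since `d⁺_{D-S}(v) = d⁺_D(v) - d⁺_S(v)`, this monomial
is `∏_v x_v^{d⁺_D(v)}` exactly when `d⁻_S(v) = d⁺_S(v)` for all `v`, i.e. when `S` is Eulerian.
-/

namespace MvPolynomial

variable {R σ ι : Type*} [CommRing R] [DecidableEq ι]

theorem prod_X_sub_X_eq_sum_powerset (A : Finset ι) (f g : ι → σ) :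
    ∏ e ∈ A, (X (f e) - X (g e) : MvPolynomial σ R) =
      ∑ S ∈ A.powerset, monomial
        (∑ e ∈ S, Finsupp.single (g e) 1 + ∑ e ∈ A \ S, Finsupp.single (f e) 1)
        ((-1) ^ #S) := by
  have hsplit : ∀ e, (X (f e) - X (g e) : MvPolynomial σ R) =
      monomial (Finsupp.single (g e) 1) (-1) + monomial (Finsupp.single (f e) 1) 1 := by
    intro e
    rw [sub_eq_neg_add, X, X, ← map_neg]
  simp_rw [hsplit, prod_add, ← monomial_sum_prod, monomial_mul, prod_const, one_pow, mul_one]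

end MvPolynomial

theorem Finsupp.sum_single_one_apply {ι α : Type*} [DecidableEq α] (s : Finset ι) (f : ι → α)
    (a : α) : (∑ i ∈ s, Finsupp.single (f i) 1) a = #{i ∈ s | f i = a} := by
  rw [Finsupp.finsetSum_apply, card_filter]
  exact Finset.sum_congr rfl fun i _ => single_apply

theorem Finset.sum_neg_one_pow_eq_card_even_sub_card_odd {ι R : Type*} [CommRing R]
    (s : Finset ι) (n : ι → ℕ) :
    ∑ i ∈ s, (-1 : R) ^ n i = #{i ∈ s | Even (n i)} - #{i ∈ s | Odd (n i)} := by
  have hsign : ∀ i, (-1 : R) ^ n i =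
      (if Even (n i) then 1 else 0) - (if Odd (n i) then 1 else 0) := by
    intro i
    rcases Nat.even_or_odd (n i) with h | h
    · simp [h, h.neg_one_pow, Nat.not_odd_iff_even.2 h]
    · simp [h, h.neg_one_pow, Nat.not_even_iff_odd.2 h]
  simp_rw [hsign, sum_sub_distrib, sum_boole]

section Digraph

variable {V : Type*} [DecidableEq V]

theorem outDeg_sdiff_add_outDeg {A S : Finset (V × V)} (hS : S ⊆ A) (v : V) :
    outDeg (A \ S) v + outDeg S v = outDeg A v := by
  rw [outDeg, outDeg, outDeg, ← card_union_of_disjoint (disjoint_filter_filter sdiff_disjoint),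
    ← filter_union, sdiff_union_of_subset hS]

theorem sum_single_snd_add_sum_sdiff_single_fst_eq_iff_isEulerian [Fintype V] {A S : Finset (V × V)}
    (hS : S ⊆ A) :
    ∑ e ∈ S, Finsupp.single e.2 1 + ∑ e ∈ A \ S, Finsupp.single e.1 1 =
        Finsupp.equivFunOnFinite.symm (outDeg A) ↔ IsEulerian S := by
  refine Finsupp.ext_iff.trans (forall_congr' fun v => ?_)
  have h := outDeg_sdiff_add_outDeg hS v
  simp only [Finsupp.add_apply, Finsupp.sum_single_one_apply, Finsupp.coe_equivFunOnFinite_symm]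
  change inDeg S v + outDeg (A \ S) v = outDeg A v ↔ outDeg S v = inDeg S v
  omega

theorem coeff_prod_X_sub_X_outDeg_eq_sum_isEulerian {R : Type*} [CommRing R] [Fintype V]
    (A : Finset (V × V)) :
    (∏ e ∈ A, (X e.1 - X e.2 : MvPolynomial V R)).coeff
        (Finsupp.equivFunOnFinite.symm (outDeg A)) =
      ∑ S ∈ A.powerset with IsEulerian S, (-1 : R) ^ #S := by
  rw [prod_X_sub_X_eq_sum_powerset, coeff_sum, sum_filter]
  refine sum_congr rfl fun S hS => ?_
  rw [coeff_monomial, if_congr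
    (sum_single_snd_add_sum_sdiff_single_fst_eq_iff_isEulerian (mem_powerset.1 hS)) rfl rfl]

end Digraph

theorem coeff_graphPoly_eq_EE_sub_EO_general {V : Type*} [Fintype V] [DecidableEq V]
    (A : Finset (V × V)) :
    (∏ e ∈ A, (MvPolynomial.X e.1 - MvPolynomial.X e.2 : MvPolynomial V ℝ)).coeff
        (Finsupp.equivFunOnFinite.symm fun v => outDeg A v)
      = (EE A : ℝ) - (EO A : ℝ) := by
  rw [coeff_prod_X_sub_X_outDeg_eq_sum_isEulerian, sum_neg_one_pow_eq_card_even_sub_card_odd,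
    filter_filter, filter_filter, EE, EO]

/-- The coefficient of `∏ x_v^{d⁺(v)}` in `∏_{(v,w)∈E(D)} (x_v - x_w)` equals `EE(D) - EO(D)`. -/
theorem coeff_graphPoly_eq_EE_sub_EO {V : Type*} [Fintype V] [DecidableEq V]
    (G : SimpleGraph V) (A : Finset (V × V)) (hA : IsOrientation G A) :
    (∏ e ∈ A, (MvPolynomial.X e.1 - MvPolynomial.X e.2 : MvPolynomial V ℝ)).coeff
        (Finsupp.equivFunOnFinite.symm fun v => outDeg A v)
      = (EE A : ℝ) - (EO A : ℝ) :=
  coeff_graphPoly_eq_EE_sub_EO_general A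
end

section
/- Let D be a digraph, and let M be a monomial in the expansion of ∏_{(v,w) ∈ E(D)} (y_v − x_w) obtained by choosing one signed variable per factor, with S_M the associated spanning subdigraph of D (arcs where −x_w was chosen). Then S_M is Eulerian if and only if deg_M(x_v) + deg_M(y_v) = d⁺_D(v) for every vertex v. -/
open Finset MvPolynomial

/-! Writing `S` for the arcs where `-x_w` was chosen, `deg_M(x_v)` is the in-degree of `v` in `S`
and `deg_M(y_v)` is the out-degree of `v` in `A \ S`. Since the out-arcs of `v` in `A` split into
those in `S` and those outside it, the degree condition reads
`d⁻_S(v) + d⁺_{A∖S}(v) = d⁺_S(v) + d⁺_{A∖S}(v)`, i.e. `d⁻_S(v) = d⁺_S(v)`. -/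

section CardFilter

variable {α β : Type*}

theorem Finset.card_filter_image_of_injective [DecidableEq β] {f : α → β}
    (hf : Function.Injective f) (s : Finset α) (p : β → Prop) [DecidablePred p] :
    #((s.image f).filter p) = #(s.filter fun a => p (f a)) := by
  rw [filter_image, card_image_of_injective _ hf]

theorem Finset.card_filter_attach (s : Finset α) (p : α → Prop) [DecidablePred p] :
    #(s.attach.filter fun a : s => p a) = #(s.filter p) := by
  rw [filter_attach, card_map, card_attach]

theorem Finset.card_filter_eq_card_filter_true_add_card_filter_false (s : Finset α)
    (b : α → Bool) (p : α → Prop) [DecidablePred p] :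
    #(s.filter p) =
      #(s.filter fun a => b a = true ∧ p a) + #(s.filter fun a => b a = false ∧ p a) := by
  rw [← card_filter_add_card_filter_not (s := s.filter p) fun a => b a = true,
    filter_filter, filter_filter]
  congr 2 <;> ext a <;> simp [and_comm]

end CardFilter

/-- The monomial `M` is encoded by `c`: `c e = true` means `-x_{e.2}` was chosen from the factor
of the arc `e`, and `c e = false` means `y_{e.1}` was. -/
theorem eulerian_iff_degree_condition_general {V : Type*} [DecidableEq V]
    (A : Finset (V × V)) (c : {e // e ∈ A} → Bool) :
    IsEulerian ((A.attach.filter fun e => c e = true).image Subtype.val : Finset (V × V)) ↔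
      ∀ v : V,
        (A.attach.filter fun e => c e = true ∧ (e : V × V).2 = v).card
          + (A.attach.filter fun e => c e = false ∧ (e : V × V).1 = v).card
          = outDeg A v := by
  have hS : ∀ (p : V × V → Prop) [DecidablePred p],
      #(((A.attach.filter fun e => c e = true).image Subtype.val).filter p)
        = #(A.attach.filter fun e => c e = true ∧ p e) := fun p _ => by
    rw [card_filter_image_of_injective Subtype.val_injective, filter_filter]
  have hA : ∀ v, outDeg A v = #(A.attach.filter fun e => c e = true ∧ (e : V × V).1 = v)
      + #(A.attach.filter fun e => c e = false ∧ (e : V × V).1 = v) := fun v => by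
    rw [outDeg, ← card_filter_attach A (·.1 = v),
      card_filter_eq_card_filter_true_add_card_filter_false _ c]
  refine forall_congr' fun v => ?_
  rw [hA, outDeg, inDeg, hS, hS]
  omega

/-- `S_M` is Eulerian iff `deg_M(x_v) + deg_M(y_v) = d⁺_D(v)` for every vertex `v`.
Here the monomial `M` is encoded by the choice function `c` (with `c e = true` meaning `-x_{e.2}`
was chosen from the factor of arc `e`, and `c e = false` meaning `y_{e.1}` was chosen), so that
`deg_M(x_v)` is the number of arcs `e` with `c e = true` and `e.2 = v`, and `deg_M(y_v)` is the
number of arcs `e` with `c e = false` and `e.1 = v`. -/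
theorem eulerian_iff_degree_condition {V : Type*} [Fintype V] [DecidableEq V]
    (A : Finset (V × V)) (c : {e // e ∈ A} → Bool) :
    IsEulerian ((A.attach.filter fun e => c e = true).image Subtype.val : Finset (V × V)) ↔
      ∀ v : V,
        (A.attach.filter fun e => c e = true ∧ (e : V × V).2 = v).card
          + (A.attach.filter fun e => c e = false ∧ (e : V × V).1 = v).card
          = outDeg A v :=
  eulerian_iff_degree_condition_general A c
end

section
/- In the digraph W(D) constructed from a digraph D, two γ-paths P(u,v;w) and P(x,y;z) are edge disjoint if and only if (u,v) ≠ (x,y) as arcs of D. -/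
open Finset MvPolynomial

def sectorOf {V : Type*} : WV V → Option (V × V)
  | .inl _ => none
  | .inr (.inl (e, _)) => some e
  | .inr (.inr (e, _)) => some e

/-- Each arc of `W(D)` has an endpoint in a sector and its other endpoint is starred or in the
same sector, so this names the unique sector the arc belongs to. -/
def arcSector {V : Type*} (a : WV V × WV V) : Option (V × V) :=
  (sectorOf a.1).or (sectorOf a.2)

section GammaPath

variable {V : Type*} [Fintype V] [DecidableEq V] (A : Finset (V × V)) (e : V × V) (x : V)

theorem entryArc_mem_gammaPath : (vstar e.1, vsec e e.1) ∈ gammaPath A e x := by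
  unfold gammaPath
  split_ifs <;> simp

theorem arcSector_of_mem_gammaPath {a : WV V × WV V} (ha : a ∈ gammaPath A e x) :
    arcSector a = some e := by
  unfold gammaPath at ha
  split_ifs at ha <;>
    simp only [Finset.mem_insert, Finset.mem_singleton] at ha <;>
    rcases ha with rfl | rfl | rfl | rfl <;> rfl

end GammaPath

theorem gammaPath_disjoint_iff_general {V : Type*} [Fintype V] [DecidableEq V]
    (A : Finset (V × V))
    (e e' : V × V)
    (x z : V) :
    Disjoint (gammaPath A e x) (gammaPath A e' z) ↔ e ≠ e' := by
  constructor
  · rintro hdisj rfl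
    exact Finset.disjoint_left.mp hdisj (entryArc_mem_gammaPath A e x)
      (entryArc_mem_gammaPath A e z)
  · intro hne
    refine Finset.disjoint_left.mpr fun a ha ha' => hne ?_
    exact Option.some_injective _ <|
      (arcSector_of_mem_gammaPath A e x ha).symm.trans (arcSector_of_mem_gammaPath A e' z ha')

/-- Two γ-paths are edge disjoint iff they pass through distinct sectors. -/
theorem gammaPath_disjoint_iff {V : Type*} [Fintype V] [DecidableEq V]
    (A : Finset (V × V)) (hsimple : ∀ v, (v, v) ∉ A)
    (e e' : V × V) (he : e ∈ A) (he' : e' ∈ A)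
    (x z : V) (hx : x ∈ gammaEnds A e) (hz : z ∈ gammaEnds A e') :
    Disjoint (gammaPath A e x) (gammaPath A e' z) ↔ e ≠ e' :=
  gammaPath_disjoint_iff_general A e e' x z
end

section
/- Let D be an orientation of a graph G. If for every odd cycle C of G there exists a vertex u ∈ V(C) such that u is simplicial in G (its neighborhood is a clique) and d⁺_D(u) = 0, then every odd directed cycle is absent from W(D); consequently EO(W(D)) = 0 and EE(W(D)) ≥ 1. -/
open Finset MvPolynomial

/-!
Let `T` be the set of simplicial sinks. Every odd cycle of `G` meets `T`, so `G - T` is bipartite;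
let `g : V → ZMod 2` be a 2-colouring of it. Give `x*` the value `g x`, the sector vertex `x^{vw}`
the value `g x + 1` and the middle vertex `y^{vw}_x` the value `g v`. Along every arc of `W(D)`
that can be continued by two more arcs, as on a directed cycle or in an Eulerian subdigraph, this
potential changes by `1`. The only nontrivial arcs are `v^{vw} → x^{vw}`, where `v` and `x` are
adjacent non-sinks (`x*` has to be left again, so `x` has an out-neighbour in `D`), and
`y^{vw}_x → x^{vw}`, where `w` is not simplicial because its neighbours `v` and `x` are
non-adjacent, so that `g v ≠ g w ≠ g x`. Every directed cycle and every Eulerian subdigraph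
therefore has an even number of arcs.
-/

namespace SimpleGraph

variable {V : Type*} {G : SimpleGraph V}

theorem Walk.even_length_cons_of_isPath (hG : ∀ u (c : G.Walk u u), c.IsCycle → Even c.length)
    {u x : V} (h : G.Adj u x) {q : G.Walk x u} (hq : q.IsPath) : Even (cons h q).length := by
  by_cases he : s(u, x) ∈ q.edges
  · rw [Sym2.eq_swap] at he
    simp [hq.length_eq_one_of_mem_edges he]
  · exact hG _ _ ((cons_isCycle_iff q h).mpr ⟨hq, he⟩)

theorem Walk.exists_isPath_length_modEq [DecidableEq V]
    (hG : ∀ u (c : G.Walk u u), c.IsCycle → Even c.length) {u v : V} (p : G.Walk u v) :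
    ∃ q : G.Walk u v, q.IsPath ∧ q.length ≡ p.length [MOD 2] := by
  induction p with
  | nil => exact ⟨nil, .nil, rfl⟩
  | @cons u x v h r ih =>
    obtain ⟨q, hq, hqr⟩ := ih
    by_cases hu : u ∈ q.support
    · -- cut the even closed walk `cons h (q.takeUntil u hu)` off `cons h q`
      have hsplit := congrArg length (q.take_spec hu)
      have hloop := even_length_cons_of_isPath hG h (hq.takeUntil hu)
      rw [length_append] at hsplit
      rw [length_cons, Nat.even_iff] at hloop
      refine ⟨q.dropUntil u hu, hq.dropUntil hu, ?_⟩
      rw [length_cons]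
      unfold Nat.ModEq at hqr ⊢
      omega
    · exact ⟨cons h q, hq.cons hu, by simpa using Nat.ModEq.add_right 1 hqr⟩

theorem Walk.even_length_of_forall_isCycle_even
    (hG : ∀ u (c : G.Walk u u), c.IsCycle → Even c.length) {u : V} (p : G.Walk u u) :
    Even p.length := by
  classical
  cases p with
  | nil => simp
  | cons h r =>
    obtain ⟨q, hq, hqr⟩ := Walk.exists_isPath_length_modEq hG r
    have := even_length_cons_of_isPath hG h hq
    rw [length_cons, Nat.even_iff] at this ⊢
    unfold Nat.ModEq at hqr
    omega

theorem colorable_two_of_forall_isCycle_even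
    (hG : ∀ u (c : G.Walk u u), c.IsCycle → Even c.length) : G.Colorable 2 :=
  two_colorable_iff_forall_loop_even.mpr fun _ p => Walk.even_length_of_forall_isCycle_even hG p

theorem exists_two_coloring_of_odd_cycles_meet {P : V → Prop}
    (hP : ∀ u (c : G.Walk u u), c.IsCycle → Odd c.length → ∃ v ∈ c.support, P v) :
    ∃ g : V → ZMod 2, ∀ a b, G.Adj a b → ¬P a → ¬P b → g a ≠ g b := by
  classical
  have hcol : (G.induce {v | ¬P v}).Colorable 2 := by
    refine colorable_two_of_forall_isCycle_even fun u c hc => ?_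
    let φ := Embedding.induce (G := G) {v | ¬P v}
    by_contra hodd
    obtain ⟨v, hv, hPv⟩ := hP _ (c.map φ.toHom) (hc.map φ.injective)
      (by simpa using Nat.not_even_iff_odd.mp hodd)
    obtain ⟨w, hw, -, rfl⟩ := by simpa [Walk.support_map] using hv
    exact hw hPv
  have col : (G.induce {v | ¬P v}).Coloring (ZMod 2) := hcol.some
  refine ⟨fun v => if h : P v then 0 else col ⟨v, h⟩, fun a b hab ha hb => ?_⟩
  simpa [ha, hb] using col.valid (v := ⟨a, ha⟩) (w := ⟨b, hb⟩) hab

end SimpleGraph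

section ArcParity

variable {α : Type*} [DecidableEq α]

theorem IsEulerian.exists_arc_from {S : Finset (α × α)} (hS : IsEulerian S) {a b : α}
    (hab : (a, b) ∈ S) : ∃ c, (b, c) ∈ S := by
  have hin : 0 < inDeg S b := card_pos.mpr ⟨(a, b), mem_filter.mpr ⟨hab, rfl⟩⟩
  obtain ⟨⟨b', c⟩, hout⟩ := card_pos.mp (hS b ▸ hin : 0 < outDeg S b)
  obtain ⟨hbc, rfl : b' = b⟩ := mem_filter.mp hout
  exact ⟨c, hbc⟩

theorem IsEulerian.sum_snd_eq_sum_fst {M : Type*} [AddCommMonoid M] {S : Finset (α × α)}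
    (hS : IsEulerian S) (f : α → M) : ∑ p ∈ S, f p.2 = ∑ p ∈ S, f p.1 := by
  let t := S.image Prod.fst ∪ S.image Prod.snd
  have hsnd (p) (hp : p ∈ S) : p.2 ∈ t := mem_union_right _ (mem_image_of_mem _ hp)
  have hfst (p) (hp : p ∈ S) : p.1 ∈ t := mem_union_left _ (mem_image_of_mem _ hp)
  rw [← sum_fiberwise_of_maps_to hsnd, ← sum_fiberwise_of_maps_to hfst]
  refine sum_congr rfl fun v _ => ?_
  rw [sum_congr rfl fun p hp => congrArg f (mem_filter.mp hp).2,
    sum_congr rfl fun p hp => congrArg f (mem_filter.mp hp).2, sum_const, sum_const]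
  exact congrArg (· • f v) (hS v).symm

theorem IsEulerian.even_card {S : Finset (α × α)} (hS : IsEulerian S) (f : α → ZMod 2)
    (hf : ∀ p ∈ S, f p.2 = f p.1 + 1) : Even S.card := by
  have h := hS.sum_snd_eq_sum_fst f
  rw [sum_congr rfl hf, sum_add_distrib, sum_const, nsmul_one, add_eq_left,
    ZMod.natCast_eq_zero_iff] at h
  exact even_iff_two_dvd.mpr h

theorem even_of_forall_map_add_one {n : ℕ} (h : ZMod n → ZMod 2) (hh : ∀ i, h (i + 1) = h i + 1) :
    Even n := by
  have hk : ∀ k : ℕ, h k = h 0 + k := by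
    intro k
    induction k with
    | zero => simp
    | succ k ih => push_cast; rw [hh, ih, add_assoc]
  have := hk n
  rw [ZMod.natCast_self, left_eq_add, ZMod.natCast_eq_zero_iff] at this
  exact even_iff_two_dvd.mpr this

end ArcParity

section WDigraph

variable {V : Type*}

def IsSimplicialSink [DecidableEq V] (G : SimpleGraph V) (A : Finset (V × V)) (u : V) : Prop :=
  G.IsClique (G.neighborSet u) ∧ outDeg A u = 0

def wPotential (g : V → ZMod 2) : WV V → ZMod 2
  | .inl x => g x
  | .inr (.inl (_, x)) => g x + 1
  | .inr (.inr (e, _)) => g e.1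

@[simp] lemma wPotential_vstar (g : V → ZMod 2) (x : V) : wPotential g (vstar x) = g x := rfl

@[simp] lemma wPotential_vsec (g : V → ZMod 2) (e : V × V) (x : V) :
    wPotential g (vsec e x) = g x + 1 := rfl

@[simp] lemma wPotential_vmid (g : V → ZMod 2) (e : V × V) (x : V) :
    wPotential g (vmid e x) = g e.1 := rfl

lemma outDeg_ne_zero_of_mem [DecidableEq V] {A : Finset (V × V)} {v w : V} (h : (v, w) ∈ A) :
    outDeg A v ≠ 0 :=
  card_ne_zero_of_mem (mem_filter.mpr ⟨h, rfl⟩)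

lemma not_isSimplicialSink_of_mem [DecidableEq V] {G : SimpleGraph V} {A : Finset (V × V)}
    {v w : V} (h : (v, w) ∈ A) : ¬IsSimplicialSink G A v :=
  fun hv => outDeg_ne_zero_of_mem h hv.2

variable [Fintype V] [DecidableEq V] {A : Finset (V × V)}

lemma IsOrientation.adj_of_mem_nbr {G : SimpleGraph V} (hA : IsOrientation G A) {v x : V}
    (hx : x ∈ nbr A v) : G.Adj v x :=
  (hA.1 v x).mpr (by simpa [nbr] using hx)

lemma mem_WArcSet_iff {a b : WV V} :
    (a, b) ∈ WArcSet A ↔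
      (∃ e ∈ A, a = vstar e.1 ∧ b = vsec e e.1) ∨
      (∃ e ∈ A, ∃ x ∈ nbr A e.1 \ nbr A e.2, a = vsec e e.1 ∧ b = vsec e x) ∨
      (∃ e ∈ A, ∃ x ∈ nbr A e.2 \ nbrC A e.1, a = vsec e e.1 ∧ b = vmid e x) ∨
      (∃ e ∈ A, ∃ x ∈ nbr A e.2 \ nbrC A e.1, a = vmid e x ∧ b = vsec e x) ∨
      (∃ e ∈ A, ∃ x ∈ gammaEnds A e, a = vsec e x ∧ b = vstar x) := by
  simp only [WArcSet, mem_union, mem_image, mem_biUnion, Prod.ext_iff, or_assoc]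
  simp only [eq_comm]

lemma outDeg_ne_zero_of_vstar_mem_WArcSet {x : V} {d : WV V} (h : (vstar x, d) ∈ WArcSet A) :
    outDeg A x ≠ 0 := by
  rcases mem_WArcSet_iff.mp h with ⟨e, he, hx, -⟩ | ⟨_, _, _, _, ha, _⟩ | ⟨_, _, _, _, ha, _⟩ |
    ⟨_, _, _, _, ha, _⟩ | ⟨_, _, _, _, ha, _⟩
  · obtain rfl : x = e.1 := Sum.inl_injective hx
    exact outDeg_ne_zero_of_mem he
  all_goals simp [vstar, vsec, vmid] at ha

lemma eq_vstar_of_vsec_mem_WArcSet {e : V × V} {x : V} {c : WV V}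
    (h : (vsec e x, c) ∈ WArcSet A) (hx : x ≠ e.1) : c = vstar x := by
  rcases mem_WArcSet_iff.mp h with ⟨_, _, ha, _⟩ | ⟨_, _, _, _, ha, _⟩ | ⟨_, _, _, _, ha, _⟩ |
    ⟨_, _, _, _, ha, _⟩ | ⟨_, _, y, _, ha, rfl⟩
  all_goals simp only [vstar, vsec, vmid, reduceCtorEq, Sum.inr.injEq, Sum.inl.injEq,
    Prod.mk.injEq] at ha
  · exact absurd (ha.1 ▸ ha.2) hx
  · exact absurd (ha.1 ▸ ha.2) hx
  · rw [ha.2]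

end WDigraph

lemma ZMod.two_add_one_add_one (a : ZMod 2) : a + 1 + 1 = a := by
  revert a; decide

lemma ZMod.two_eq_add_one_of_ne {a b : ZMod 2} (h : a ≠ b) : b = a + 1 := by
  revert a b; decide

lemma ZMod.two_eq_of_ne_of_ne {a b c : ZMod 2} (ha : a ≠ c) (hb : b ≠ c) : a = b := by
  revert a b c; decide

section WPotential

variable {V : Type*} [Fintype V] [DecidableEq V] {G : SimpleGraph V} {A : Finset (V × V)}

lemma wPotential_snd_eq_add_one (hA : IsOrientation G A) {g : V → ZMod 2}
    (hg : ∀ a b, G.Adj a b → ¬IsSimplicialSink G A a → ¬IsSimplicialSink G A b → g a ≠ g b)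
    {a b c d : WV V} (hab : (a, b) ∈ WArcSet A) (hbc : (b, c) ∈ WArcSet A)
    (hcd : (c, d) ∈ WArcSet A) : wPotential g b = wPotential g a + 1 := by
  have hsec : ∀ e x, b = vsec e x → x ≠ e.1 → ¬IsSimplicialSink G A x := by
    rintro e x rfl hx ⟨-, h0⟩
    rw [eq_vstar_of_vsec_mem_WArcSet hbc hx] at hcd
    exact outDeg_ne_zero_of_vstar_mem_WArcSet hcd h0
  rcases mem_WArcSet_iff.mp hab with ⟨e, he, rfl, rfl⟩ | ⟨e, he, x, hx, rfl, rfl⟩ |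
    ⟨e, he, x, hx, rfl, rfl⟩ | ⟨e, he, x, hx, rfl, rfl⟩ | ⟨e, he, x, hx, rfl, rfl⟩
  · simp
  · have hvx := hA.adj_of_mem_nbr (mem_sdiff.mp hx).1
    have := hg _ _ hvx (not_isSimplicialSink_of_mem he) (hsec e x rfl hvx.ne')
    simp [ZMod.two_eq_add_one_of_ne this]
  · simp [ZMod.two_add_one_add_one]
  · obtain ⟨hwx, hvx⟩ := mem_sdiff.mp hx
    have hwx := hA.adj_of_mem_nbr hwx
    have hvw : G.Adj e.1 e.2 := (hA.1 _ _).mpr (Or.inl he)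
    have hxv : x ≠ e.1 := fun h => hvx (h ▸ mem_insert_self _ _)
    have hnvx : ¬G.Adj e.1 x := fun h =>
      hvx (mem_insert_of_mem (by simpa [nbr] using (hA.1 _ _).mp h))
    have hw : ¬IsSimplicialSink G A e.2 := fun h => hnvx (h.1 hvw.symm hwx hxv.symm)
    simp [ZMod.two_eq_of_ne_of_ne (hg _ _ hwx.symm (hsec e x rfl hxv) hw)
      (hg _ _ hvw (not_isSimplicialSink_of_mem he) hw)]
  · simp [ZMod.two_add_one_add_one]

end WPotential

theorem no_odd_dicycle_of_simplicial_sinks_general {V : Type*} [Fintype V] [DecidableEq V]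
    (G : SimpleGraph V)
    (A : Finset (V × V)) (hA : IsOrientation G A)
    (hodd : ∀ (v : V) (C : G.Walk v v), C.IsCycle → Odd C.length →
      ∃ u ∈ C.support, G.IsClique (G.neighborSet u) ∧ outDeg A u = 0) :
    (∀ n : ℕ, Odd n → ¬ HasDicycleLen (WArcSet A) n) ∧
      EO (WArcSet A) = 0 ∧ 1 ≤ EE (WArcSet A) := by
  obtain ⟨g, hg⟩ := G.exists_two_coloring_of_odd_cycles_meet (P := IsSimplicialSink G A) hodd
  have hflip {a b c d : WV V} := wPotential_snd_eq_add_one hA hg (a := a) (b := b) (c := c)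
    (d := d)
  refine ⟨?_, ?_, ?_⟩
  · rintro n hn ⟨-, c, -, hc⟩
    exact Nat.not_even_iff_odd.mpr hn <| even_of_forall_map_add_one (wPotential g ∘ c)
      fun i => hflip (hc i) (hc (i + 1)) (hc (i + 1 + 1))
  · rw [EO, card_eq_zero, filter_eq_empty_iff]
    rintro S hSW ⟨hS, hcard⟩
    refine Nat.not_even_iff_odd.mpr hcard (hS.even_card (wPotential g) ?_)
    rintro ⟨a, b⟩ hab
    obtain ⟨c, hbc⟩ := hS.exists_arc_from hab
    obtain ⟨d, hcd⟩ := hS.exists_arc_from hbc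
    have hSW := mem_powerset.mp hSW
    exact hflip (hSW hab) (hSW hbc) (hSW hcd)
  · exact card_pos.mpr ⟨∅, by simp [IsEulerian, outDeg, inDeg]⟩

/-- If every odd cycle of `G` contains a simplicial vertex of out-degree 0 in `D`, then
`W(D)` has no odd directed cycle; consequently `EO(W(D)) = 0` and `EE(W(D)) ≥ 1`. -/
theorem no_odd_dicycle_of_simplicial_sinks {V : Type*} [Fintype V] [DecidableEq V]
    (G : SimpleGraph V) [DecidableRel G.Adj]
    (A : Finset (V × V)) (hA : IsOrientation G A)
    (hodd : ∀ (v : V) (C : G.Walk v v), C.IsCycle → Odd C.length →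
      ∃ u ∈ C.support, G.IsClique (G.neighborSet u) ∧ outDeg A u = 0) :
    (∀ n : ℕ, Odd n → ¬ HasDicycleLen (WArcSet A) n) ∧
      EO (WArcSet A) = 0 ∧ 1 ≤ EE (WArcSet A) :=
  no_odd_dicycle_of_simplicial_sinks_general G A hA hodd
end

section
/- Let G be a graph and D an orientation of G such that for every odd (undirected) cycle C of G there is a vertex u ∈ V(C) that is simplicial in G and satisfies d⁺_D(u) = 0. If L(v) is a list of d⁺_D(v) + 1 positive integers for each vertex v, then there is an additive coloring of G assigning to each v an element of L(v). -/
open Finset MvPolynomial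

/-!
Alon's Combinatorial Nullstellensatz, applied to
`P = ∏_{(v,w) ∈ D} (∑_{u ∈ N(w)} x_u - ∑_{u ∈ N(v)} x_u)`: a point of `∏_v L(v)` where `P`
does not vanish is an additive coloring, and `P` is homogeneous of degree `|D|`, so it suffices
that the coefficient of `∏_v x_v ^ d⁺(v)` is nonzero. That coefficient is a signed count of the
maps `f` choosing `f(e) ∈ N(w) △ N(v)` for every arc `e = (v,w)` and hitting each vertex `v`
exactly `d⁺(v)` times. Deleting the simplicial sinks leaves a bipartite graph, and with a sign
`σ = ±1` from its 2-coloring the sign of the choice `f(e)` is `σ(v) σ(f(e))`. As `f` and the tail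
map have the same fibres, every term is `+1`, and the term `f(e) = v` is present.
-/

namespace SimpleGraph
variable {V : Type*} {G : SimpleGraph V}

namespace Walk

theorem exists_isPath_or_odd_isCycle : ∀ {u v : V} (p : G.Walk u v),
    (∃ q : G.Walk u v, q.IsPath ∧ q.support ⊆ p.support ∧ q.length % 2 = p.length % 2) ∨
      ∃ (x : V) (c : G.Walk x x), c.IsCycle ∧ Odd c.length ∧ c.support ⊆ p.support
  | _, _, .nil => Or.inl ⟨.nil, by simp, by simp, rfl⟩
  | u, _, .cons h p => by
    classical
    have hsub : p.support ⊆ (cons h p).support := by simp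
    rcases exists_isPath_or_odd_isCycle p with ⟨q, hq, hqp, hlen⟩ | ⟨x, c, hc, hodd, hcp⟩
    · by_cases hu : u ∈ q.support
      · -- the closed walk `cons h (q.takeUntil u hu)` is an odd cycle unless the path
        -- `q.dropUntil u hu` already has the parity of `cons h p`
        have hsplit := congrArg length (q.take_spec hu)
        rw [length_append] at hsplit
        rcases Nat.even_or_odd (q.takeUntil u hu).length with heven | hodd
        · right
          have hne : (q.takeUntil u hu).length ≠ 0 := fun h0 =>
            h.ne (length_eq_zero_iff.1 h0).eq.symm
          refine ⟨u, cons h (q.takeUntil u hu), ?_, by simpa [Nat.odd_add_one] using heven, ?_⟩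
          · rw [isCycle_iff_isPath_tail_and_le_length]
            refine ⟨by simpa using hq.takeUntil hu, ?_⟩
            obtain ⟨k, hk⟩ := heven
            simp only [length_cons]
            omega
          · rw [support_cons]
            exact List.cons_subset_cons _ <| List.Subset.trans
              (q.support_takeUntil_subset_support hu) (List.Subset.trans hqp (by simp))
        · left
          refine ⟨q.dropUntil u hu, hq.dropUntil hu, List.Subset.trans
            (List.Subset.trans (q.support_dropUntil_subset_support hu) hqp) hsub, ?_⟩
          obtain ⟨k, hk⟩ := hodd
          simp only [length_cons]
          omega
      · left
        exact ⟨cons h q, (cons_isPath_iff h q).2 ⟨hq, hu⟩,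
          by simpa using List.subset_cons_of_subset _ hqp, by simp only [length_cons]; omega⟩
    · exact Or.inr ⟨x, c, hc, hodd, List.Subset.trans hcp hsub⟩

theorem exists_odd_isCycle_of_odd_length {u : V} (p : G.Walk u u)
    (hp : Odd p.length) :
    ∃ (x : V) (c : G.Walk x x), c.IsCycle ∧ Odd c.length ∧ c.support ⊆ p.support := by
  refine (exists_isPath_or_odd_isCycle p).resolve_left ?_
  rintro ⟨q, hq, -, hlen⟩
  rw [length_eq_zero_iff.2 (isPath_iff_nil.1 hq)] at hlen
  rw [Nat.odd_iff] at hp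
  omega

end Walk

theorem colorable_two_induce_of_forall_odd_isCycle {s : Set V}
    (h : ∀ (x : V) (c : G.Walk x x), c.IsCycle → Odd c.length → ∃ u ∈ c.support, u ∉ s) :
    (G.induce s).Colorable 2 := by
  refine two_colorable_iff_forall_loop_even.2 fun u w => ?_
  by_contra hw
  obtain ⟨x, c, hc, hodd, hsub⟩ :=
    (w.map (Embedding.induce s).toHom).exists_odd_isCycle_of_odd_length
      (by rw [Walk.length_map]; exact Nat.not_even_iff_odd.1 hw)
  obtain ⟨y, hy, hys⟩ := h x c hc hodd
  obtain ⟨z, -, rfl⟩ := List.mem_map.1 (Walk.support_map _ w ▸ hsub hy)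
  exact hys z.2

theorem exists_sign_of_colorable_two_induce {s : Set V} (h : (G.induce s).Colorable 2) :
    ∃ σ : V → ℤ, (∀ u, σ u * σ u = 1) ∧ ∀ u ∈ s, ∀ v ∈ s, G.Adj u v → σ u * σ v = -1 := by
  classical
  obtain ⟨c⟩ := h
  refine ⟨fun v => if hv : v ∈ s then (-1) ^ (c ⟨v, hv⟩ : ℕ) else 1, fun u => ?_,
    fun u hu v hv huv => ?_⟩
  · dsimp only
    split_ifs <;> simp [← pow_add, ← two_mul, pow_mul]
  · have hne : c ⟨u, hu⟩ ≠ c ⟨v, hv⟩ := c.valid huv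
    simp only [hu, hv, dite_true]
    generalize c ⟨u, hu⟩ = a at hne
    generalize c ⟨v, hv⟩ = b at hne
    revert a b
    decide

end SimpleGraph

namespace Finsupp
variable {ι α : Type*} [Fintype ι] {f g : ι → α}

theorem prod_comp_eq_of_sum_single_eq {M : Type*} [CommMonoid M]
    (h : ∑ i, single (f i) 1 = ∑ i, single (g i) 1) (φ : α → M) :
    ∏ i, φ (f i) = ∏ i, φ (g i) := by
  have key (k : ι → α) : ∏ i, φ (k i) = (∑ i, single (k i) 1).prod fun a n => φ a ^ n := by
    rw [← prod_finsetSum_index (fun _ => pow_zero _) (fun _ _ _ => pow_add _ _ _)]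
    simp [prod_single_index]
  rw [key f, key g, h]

theorem exists_eq_of_sum_single_eq (h : ∑ i, single (f i) 1 = ∑ i, single (g i) 1) (i : ι) :
    ∃ j, g j = f i := by
  classical
  by_contra! hne
  have hfi := congrArg (· (f i)) h
  simp only [finsetSum_apply, single_apply] at hfi
  rw [sum_eq_zero fun j _ => if_neg (hne j)] at hfi
  exact absurd (sum_eq_zero_iff.1 hfi i (mem_univ i)) (by simp)

end Finsupp

theorem MvPolynomial.coeff_prod_sum_C_mul_X {R σ ι : Type*} [CommSemiring R] [Fintype σ]
    [DecidableEq σ] [Fintype ι] [DecidableEq ι] (a : ι → σ → R) (m : σ →₀ ℕ) :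
    coeff m (∏ i, ∑ u, C (a i u) * X u) =
      ∑ f : ι → σ, if ∑ i, Finsupp.single (f i) 1 = m then ∏ i, a i (f i) else 0 := by
  rw [prod_univ_sum, Fintype.piFinset_univ, coeff_sum]
  refine sum_congr rfl fun f _ => ?_
  simp_rw [C_mul_X_eq_monomial, ← monomial_sum_prod, coeff_monomial]

section EdgeCoeff
variable {V : Type*} (G : SimpleGraph V) [DecidableRel G.Adj]

def edgeCoeff (v w u : V) : ℤ :=
  (if G.Adj w u then 1 else 0) - if G.Adj v u then 1 else 0

variable {G}

theorem edgeCoeff_self_left {v w : V} (h : G.Adj v w) : edgeCoeff G v w v = 1 := by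
  simp [edgeCoeff, h.symm]

theorem edgeCoeff_eq_mul_of_ne_zero {s : Set V} {σ : V → ℤ} (hσ : ∀ u, σ u * σ u = 1)
    (hσs : ∀ u ∈ s, ∀ v ∈ s, G.Adj u v → σ u * σ v = -1)
    (hs : ∀ u, ¬G.IsClique (G.neighborSet u) → u ∈ s) {v w x : V} (hvw : G.Adj v w)
    (hv : v ∈ s) (hx : x ∈ s) (h : edgeCoeff G v w x ≠ 0) :
    edgeCoeff G v w x = σ v * σ x := by
  unfold edgeCoeff at h ⊢
  by_cases hwx : G.Adj w x <;> by_cases hvx : G.Adj v x <;> simp only [hwx, hvx, if_true,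
    if_false, sub_self, sub_zero, zero_sub, ne_eq, not_true_eq_false] at h ⊢
  · rcases eq_or_ne x v with rfl | hxv
    · exact (hσ x).symm
    · -- `w` is not simplicial: its neighbours `v` and `x` are not adjacent
      have hw : w ∈ s := hs w fun hcl => hvx (hcl hvw.symm hwx hxv.symm)
      linear_combination (-(σ w * σ x)) * hσs v hv w hw hvw + hσs w hw x hx hwx +
        (σ v * σ x) * hσ w
  · exact (hσs v hv x hx hvx).symm

theorem prod_edgeCoeff_eq_one {s : Set V} {σ : V → ℤ}
    (hσ : ∀ u, σ u * σ u = 1) (hσs : ∀ u ∈ s, ∀ v ∈ s, G.Adj u v → σ u * σ v = -1)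
    (hs : ∀ u, ¬G.IsClique (G.neighborSet u) → u ∈ s) {ι : Type*} [Fintype ι]
    {a : ι → V × V} (hadj : ∀ i, G.Adj (a i).1 (a i).2) (htail : ∀ i, (a i).1 ∈ s)
    {f : ι → V} (hf : ∑ i, Finsupp.single (f i) 1 = ∑ i, Finsupp.single (a i).1 1)
    (h0 : ∀ i, edgeCoeff G (a i).1 (a i).2 (f i) ≠ 0) :
    ∏ i, edgeCoeff G (a i).1 (a i).2 (f i) = 1 := by
  have hfs (i : ι) : f i ∈ s := by
    obtain ⟨j, hj⟩ := Finsupp.exists_eq_of_sum_single_eq hf i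
    exact hj ▸ htail j
  calc ∏ i, edgeCoeff G (a i).1 (a i).2 (f i)
      = (∏ i, σ (a i).1) * ∏ i, σ (f i) := by
        rw [← prod_mul_distrib]
        exact prod_congr rfl fun i _ =>
          edgeCoeff_eq_mul_of_ne_zero hσ hσs hs (hadj i) (htail i) (hfs i) (h0 i)
    _ = ∏ i, σ (a i).1 * σ (a i).1 := by
        rw [Finsupp.prod_comp_eq_of_sum_single_eq hf, prod_mul_distrib]
    _ = 1 := prod_eq_one fun i _ => hσ _

end EdgeCoeff

section TailDegrees
variable {V : Type*}

noncomputable def tailDegrees (A : Finset (V × V)) : V →₀ ℕ :=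
  ∑ e ∈ A, Finsupp.single e.1 1

theorem tailDegrees_apply [DecidableEq V] (A : Finset (V × V)) (v : V) :
    tailDegrees A v = outDeg A v := by
  simp only [tailDegrees, Finsupp.finsetSum_apply, Finsupp.single_apply]
  rw [outDeg, card_filter]

theorem degree_tailDegrees (A : Finset (V × V)) : (tailDegrees A).degree = #A := by
  simp [tailDegrees, map_sum]

end TailDegrees

section ArcPoly
variable {V : Type*} [Fintype V] (G : SimpleGraph V) [DecidableRel G.Adj]

noncomputable def arcPoly (A : Finset (V × V)) : MvPolynomial V ℤ :=
  ∏ e ∈ A, (∑ u ∈ G.neighborFinset e.2, X u - ∑ u ∈ G.neighborFinset e.1, X u)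

variable {G}

theorem sum_neighborFinset_X_sub_eq (v w : V) :
    (∑ u ∈ G.neighborFinset w, X u - ∑ u ∈ G.neighborFinset v, X u : MvPolynomial V ℤ) =
      ∑ u, C (edgeCoeff G v w u) * X u := by
  simp [edgeCoeff, sub_mul, ite_mul, sum_sub_distrib, sum_ite,
    SimpleGraph.neighborFinset_eq_filter]

theorem isHomogeneous_arcPoly (A : Finset (V × V)) : (arcPoly G A).IsHomogeneous #A := by
  have hX (t : Finset V) : (∑ u ∈ t, X u : MvPolynomial V ℤ).IsHomogeneous 1 :=
    IsHomogeneous.sum _ _ _ fun u _ => isHomogeneous_X ℤ u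
  have h := IsHomogeneous.prod A _ (fun _ => 1) fun e _ =>
    (hX (G.neighborFinset e.2)).sub (hX (G.neighborFinset e.1))
  rw [sum_const, smul_eq_mul, mul_one] at h
  exact h

theorem eval_arcPoly_eq_zero {A : Finset (V × V)} {e : V × V} (he : e ∈ A) {x : V → ℤ}
    (h : ∑ u ∈ G.neighborFinset e.1, x u = ∑ u ∈ G.neighborFinset e.2, x u) :
    eval x (arcPoly G A) = 0 := by
  rw [arcPoly, map_prod]
  exact prod_eq_zero he (by simp [h])

theorem coeff_arcPoly_tailDegrees_pos [DecidableEq V] {A : Finset (V × V)}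
    (hadj : ∀ e ∈ A, G.Adj e.1 e.2)
    (hodd : ∀ (v : V) (C : G.Walk v v), C.IsCycle → Odd C.length →
      ∃ u ∈ C.support, G.IsClique (G.neighborSet u) ∧ outDeg A u = 0) :
    0 < (arcPoly G A).coeff (tailDegrees A) := by
  set s : Set V := {u | ¬(G.IsClique (G.neighborSet u) ∧ outDeg A u = 0)}
  obtain ⟨σ, hσ, hσs⟩ := SimpleGraph.exists_sign_of_colorable_two_induce
    (SimpleGraph.colorable_two_induce_of_forall_odd_isCycle (s := s) fun v C hC hC' =>
      (hodd v C hC hC').imp fun u ⟨hu, h⟩ => ⟨hu, not_not.2 h⟩)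
  have htail (e : A) : e.1.1 ∈ s := fun h =>
    (card_pos.2 ⟨e.1, mem_filter.2 ⟨e.2, rfl⟩⟩ : 0 < outDeg A e.1.1).ne' h.2
  rw [arcPoly, ← prod_coe_sort, prod_congr rfl fun e _ => sum_neighborFinset_X_sub_eq _ _,
    coeff_prod_sum_C_mul_X, tailDegrees, ← sum_coe_sort A]
  -- every term of the coefficient is `0` or `1`, and the term picking all tails is `1`
  refine sum_pos' (fun f _ => ?_) ⟨fun e : A => e.1.1, mem_univ _, ?_⟩
  · split_ifs with hf
    · by_cases h0 : ∃ e : A, edgeCoeff G e.1.1 e.1.2 (f e) = 0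
      · obtain ⟨e, he⟩ := h0
        rw [prod_eq_zero (mem_univ e) he]
      · rw [prod_edgeCoeff_eq_one hσ hσs (fun u hu h => hu h.1) (fun e : A => hadj e.1 e.2) htail
          hf (not_exists.1 h0)]
        exact zero_le_one
    · exact le_rfl
  · rw [if_pos rfl, prod_eq_one fun e _ => edgeCoeff_self_left (hadj e.1 e.2)]
    exact one_pos

end ArcPoly

theorem additive_coloring_of_simplicial_sinks_general {V : Type*} [Fintype V] [DecidableEq V]
    (G : SimpleGraph V) [DecidableRel G.Adj]
    (A : Finset (V × V)) (hA : IsOrientation G A)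
    (hodd : ∀ (v : V) (C : G.Walk v v), C.IsCycle → Odd C.length →
      ∃ u ∈ C.support, G.IsClique (G.neighborSet u) ∧ outDeg A u = 0)
    (L : V → Finset ℕ)
    (hL : ∀ v, (L v).card = outDeg A v + 1) :
    ∃ ℓ : V → ℕ, (∀ v, ℓ v ∈ L v) ∧ IsAdditiveColoring G ℓ := by
  have hadj : ∀ e ∈ A, G.Adj e.1 e.2 := fun e he => (hA.1 e.1 e.2).2 (Or.inl he)
  have hcoeff := (coeff_arcPoly_tailDegrees_pos hadj hodd).ne'
  have hdeg : (arcPoly G A).totalDegree = (tailDegrees A).degree := by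
    rw [degree_tailDegrees]
    exact (isHomogeneous_arcPoly A).totalDegree fun h0 => hcoeff (by simp [h0])
  obtain ⟨x, hxL, hx⟩ := combinatorial_nullstellensatz_exists_eval_nonzero (arcPoly G A)
    (tailDegrees A) hcoeff hdeg (fun v => (L v).map Nat.castEmbedding)
    (by simp [tailDegrees_apply, hL])
  choose ℓ hℓL hℓx using fun v => mem_map.1 (hxL v)
  obtain rfl : x = fun v => (ℓ v : ℤ) := funext fun v => (hℓx v).symm
  refine ⟨ℓ, hℓL, fun v w hvw hsum => hx ?_⟩
  rcases (hA.1 v w).1 hvw with h | h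
  · exact eval_arcPoly_eq_zero h (by exact_mod_cast hsum)
  · exact eval_arcPoly_eq_zero h (by exact_mod_cast hsum.symm)

/-- If every odd cycle of `G` contains a simplicial vertex of out-degree 0 in `D`, then `G`
admits an additive coloring from any lists of `d⁺_D(v) + 1` positive integers. -/
theorem additive_coloring_of_simplicial_sinks {V : Type*} [Fintype V] [DecidableEq V]
    (G : SimpleGraph V) [DecidableRel G.Adj]
    (A : Finset (V × V)) (hA : IsOrientation G A)
    (hodd : ∀ (v : V) (C : G.Walk v v), C.IsCycle → Odd C.length →
      ∃ u ∈ C.support, G.IsClique (G.neighborSet u) ∧ outDeg A u = 0)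
    (L : V → Finset ℕ) (hpos : ∀ v, ∀ k ∈ L v, 0 < k)
    (hL : ∀ v, (L v).card = outDeg A v + 1) :
    ∃ ℓ : V → ℕ, (∀ v, ℓ v ∈ L v) ∧ IsAdditiveColoring G ℓ :=
  additive_coloring_of_simplicial_sinks_general G A hA hodd L hL
end

section
/- Let G be a bipartite graph and D any orientation of G. If L(v) is a list of d⁺_D(v) + 1 positive integers for each vertex v, then there is an additive coloring of G assigning to each v an element of L(v). -/
/-!
Consider `P = ∏_{vw ∈ D} (∑_{u ∈ N(v)} x_u + ∑_{u ∈ N(w)} x_u)`. All its coefficients are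
nonnegative and each factor contains `x_v` (as `v ∈ N(w)`), so the top-degree monomial
`∏_v x_v ^ d⁺(v)` has a positive coefficient, and the Combinatorial Nullstellensatz gives
`s_v ∈ ε_v • L(v)` with `P(s) ≠ 0`, where `ε_v = ±1` records the side of `v` in the
bipartition. Since `N(v)` lies on the side of `w` and `N(w)` on the side of `v`, for
`ℓ_v = ε_v s_v` the factor of `vw` evaluates to `ε_w (c(v) - c(w))`, so `c(v) ≠ c(w)`.
-/

open Finset MvPolynomial

namespace MvPolynomial

variable {σ R : Type*} [CommSemiring R]

lemma totalDegree_sum_X_le (s : Finset σ) : (∑ u ∈ s, X u : MvPolynomial σ R).totalDegree ≤ 1 :=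
  totalDegree_finsetSum_le fun u _ => (totalDegree_monomial_le _ _).trans_eq (by simp)

lemma coeff_single_sum_X [DecidableEq σ] (s : Finset σ) (v : σ) :
    (∑ u ∈ s, X u : MvPolynomial σ R).coeff (Finsupp.single v 1) = if v ∈ s then 1 else 0 := by
  simp [coeff_sum, coeff_X, Finsupp.single_left_inj]

section Order

variable [PartialOrder R]

lemma coeff_mul_nonneg [IsOrderedRing R] {p q : MvPolynomial σ R} (hp : ∀ n, 0 ≤ p.coeff n)
    (hq : ∀ n, 0 ≤ q.coeff n) (n : σ →₀ ℕ) : 0 ≤ (p * q).coeff n := by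
  classical
  rw [coeff_mul]
  exact Finset.sum_nonneg fun x _ => mul_nonneg (hp x.1) (hq x.2)

lemma coeff_mul_le_coeff_add_mul [IsOrderedRing R] {p q : MvPolynomial σ R}
    (hp : ∀ n, 0 ≤ p.coeff n) (hq : ∀ n, 0 ≤ q.coeff n) (m n : σ →₀ ℕ) :
    p.coeff m * q.coeff n ≤ (p * q).coeff (m + n) := by
  classical
  rw [coeff_mul]
  refine Finset.single_le_sum (a := (m, n)) (fun x _ => mul_nonneg (hp x.1) (hq x.2)) ?_
  simp

lemma coeff_prod_nonneg [IsOrderedRing R] {ι : Type*} (s : Finset ι) (f : ι → MvPolynomial σ R)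
    (hf : ∀ i ∈ s, ∀ n, 0 ≤ (f i).coeff n) (n : σ →₀ ℕ) : 0 ≤ (∏ i ∈ s, f i).coeff n :=
  Finset.prod_induction f (fun p => ∀ n, 0 ≤ p.coeff n) (fun _ _ => coeff_mul_nonneg)
    (fun n => by classical rw [coeff_one]; split_ifs <;> simp) hf n

lemma coeff_sum_prod_pos [IsStrictOrderedRing R] {ι : Type*} (s : Finset ι)
    (f : ι → MvPolynomial σ R) (m : ι → σ →₀ ℕ)
    (hf : ∀ i ∈ s, ∀ n, 0 ≤ (f i).coeff n) (hm : ∀ i ∈ s, 0 < (f i).coeff (m i)) :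
    0 < (∏ i ∈ s, f i).coeff (∑ i ∈ s, m i) := by
  classical
  induction s using Finset.induction_on with
  | empty => simp
  | insert i s hi ih =>
    rw [Finset.prod_insert hi, Finset.sum_insert hi]
    have hfs : ∀ j ∈ s, ∀ n, 0 ≤ (f j).coeff n := fun j hj => hf j (mem_insert_of_mem hj)
    calc 0 < (f i).coeff (m i) * (∏ j ∈ s, f j).coeff (∑ j ∈ s, m j) :=
          mul_pos (hm i (mem_insert_self i s))
            (ih hfs fun j hj => hm j (mem_insert_of_mem hj))
      _ ≤ _ := coeff_mul_le_coeff_add_mul (hf i (mem_insert_self i s))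
            (coeff_prod_nonneg s f hfs) _ _

lemma coeff_sum_X_nonneg [IsOrderedRing R] (s : Finset σ) (n : σ →₀ ℕ) :
    0 ≤ (∑ u ∈ s, X u : MvPolynomial σ R).coeff n := by
  classical
  rw [coeff_sum]
  exact Finset.sum_nonneg fun u _ => by rw [coeff_X]; split_ifs <;> simp

end Order

end MvPolynomial

lemma sum_single_fst_apply {V : Type*} [DecidableEq V] (A : Finset (V × V)) (v : V) :
    (∑ e ∈ A, Finsupp.single e.1 1 : V →₀ ℕ) v = outDeg A v := by
  rw [Finsupp.finsetSum_apply, outDeg, Finset.card_filter]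
  exact Finset.sum_congr rfl fun e _ => by rw [Finsupp.single_apply]

lemma degree_sum_single_fst {V : Type*} (A : Finset (V × V)) :
    (∑ e ∈ A, Finsupp.single e.1 1 : V →₀ ℕ).degree = #A := by
  simp [map_sum, Finsupp.degree_single]

theorem MvPolynomial.exists_forall_eval_ne_zero_of_card_gt_outDeg {V R : Type*} [Finite V]
    [DecidableEq V] [CommRing R] [LinearOrder R] [IsStrictOrderedRing R]
    (A : Finset (V × V)) (f : V × V → MvPolynomial V R)
    (hdeg : ∀ e ∈ A, (f e).totalDegree ≤ 1) (hnonneg : ∀ e ∈ A, ∀ n, 0 ≤ (f e).coeff n)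
    (hpos : ∀ e ∈ A, 0 < (f e).coeff (Finsupp.single e.1 1))
    (S : V → Finset R) (hS : ∀ v, outDeg A v < #(S v)) :
    ∃ s : V → R, (∀ v, s v ∈ S v) ∧ ∀ e ∈ A, eval s (f e) ≠ 0 := by
  set t : V →₀ ℕ := ∑ e ∈ A, Finsupp.single e.1 1
  have hcoeff : 0 < (∏ e ∈ A, f e).coeff t := coeff_sum_prod_pos A f _ hnonneg hpos
  have hdeg_prod : (∏ e ∈ A, f e).totalDegree = t.degree := by
    refine le_antisymm ?_ (le_totalDegree (mem_support_iff.mpr hcoeff.ne'))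
    calc (∏ e ∈ A, f e).totalDegree ≤ ∑ e ∈ A, (f e).totalDegree := totalDegree_finsetProd A f
      _ ≤ ∑ e ∈ A, 1 := Finset.sum_le_sum hdeg
      _ = t.degree := by rw [degree_sum_single_fst, Finset.card_eq_sum_ones]
  obtain ⟨s, hs, hne⟩ := combinatorial_nullstellensatz_exists_eval_nonzero _ t hcoeff.ne'
    hdeg_prod S fun v => by rw [sum_single_fst_apply]; exact hS v
  refine ⟨s, hs, fun e he => ?_⟩
  rw [map_prod] at hne
  exact Finset.prod_ne_zero_iff.mp hne e he

namespace SimpleGraph.Coloring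

variable {V : Type*} {G : SimpleGraph V}

def sign (c : G.Coloring (Fin 2)) (v : V) : ℤ := (-1) ^ (c v : ℕ)

lemma sign_ne_zero (c : G.Coloring (Fin 2)) (v : V) : c.sign v ≠ 0 :=
  pow_ne_zero _ (by norm_num)

lemma sign_eq_neg_of_adj (c : G.Coloring (Fin 2)) {u v : V} (h : G.Adj u v) :
    c.sign u = -c.sign v := by
  have hne := c.valid h
  unfold sign
  generalize c u = a, c v = b at hne ⊢
  fin_cases a <;> fin_cases b <;> simp_all

variable [Fintype V] [DecidableRel G.Adj]

lemma sum_neighborFinset_sign_mul (c : G.Coloring (Fin 2)) (x : V → ℤ) (v : V) :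
    ∑ u ∈ G.neighborFinset v, c.sign u * x u = -c.sign v * ∑ u ∈ G.neighborFinset v, x u := by
  rw [Finset.mul_sum]
  refine Finset.sum_congr rfl fun u hu => ?_
  rw [c.sign_eq_neg_of_adj ((G.mem_neighborFinset v u).mp hu).symm]

lemma sum_neighborFinset_sign_mul_add_of_adj (c : G.Coloring (Fin 2)) (x : V → ℤ) {v w : V}
    (h : G.Adj v w) :
    ∑ u ∈ G.neighborFinset v, c.sign u * x u + ∑ u ∈ G.neighborFinset w, c.sign u * x u =
      c.sign w * (∑ u ∈ G.neighborFinset v, x u - ∑ u ∈ G.neighborFinset w, x u) := by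
  rw [sum_neighborFinset_sign_mul, sum_neighborFinset_sign_mul, c.sign_eq_neg_of_adj h]
  ring

end SimpleGraph.Coloring

theorem additive_coloring_bipartite_general {V : Type*} [Fintype V] [DecidableEq V]
    (G : SimpleGraph V) [DecidableRel G.Adj] (hbip : G.Colorable 2)
    (A : Finset (V × V)) (hA : IsOrientation G A)
    (L : V → Finset ℕ)
    (hL : ∀ v, (L v).card = outDeg A v + 1) :
    ∃ ℓ : V → ℕ, (∀ v, ℓ v ∈ L v) ∧ IsAdditiveColoring G ℓ := by
  obtain ⟨c⟩ := hbip
  have hadj : ∀ e ∈ A, G.Adj e.1 e.2 := fun e he => (hA.1 e.1 e.2).mpr (Or.inl he)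
  let f : V × V → MvPolynomial V ℤ := fun e =>
    ∑ u ∈ G.neighborFinset e.1, X u + ∑ u ∈ G.neighborFinset e.2, X u
  obtain ⟨s, hs, hne⟩ := exists_forall_eval_ne_zero_of_card_gt_outDeg A f
    (fun e _ => (totalDegree_add _ _).trans
      (max_le (totalDegree_sum_X_le _) (totalDegree_sum_X_le _)))
    (fun e _ n => add_nonneg (coeff_sum_X_nonneg _ n) (coeff_sum_X_nonneg _ n))
    (fun e he => by simp [f, coeff_single_sum_X, (hadj e he).symm])
    (fun v => (L v).image fun k : ℕ => c.sign v * k)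
    (fun v => by
      rw [card_image_of_injective _ fun a b hab =>
        Nat.cast_injective (mul_left_cancel₀ (c.sign_ne_zero v) hab), hL v]
      exact Nat.lt_succ_self _)
  choose ℓ hℓ hsℓ using fun v => mem_image.mp (hs v)
  refine ⟨ℓ, hℓ, ?_⟩
  have harc : ∀ e ∈ A, ∑ u ∈ G.neighborFinset e.1, ℓ u ≠ ∑ u ∈ G.neighborFinset e.2, ℓ u := by
    intro e he heq
    apply hne e he
    simp only [f, map_add, map_sum, eval_X, ← hsℓ]
    rw [c.sum_neighborFinset_sign_mul_add_of_adj _ (hadj e he), ← Nat.cast_sum, ← Nat.cast_sum,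
      heq, sub_self, mul_zero]
  intro v w hvw
  rcases (hA.1 v w).mp hvw with h | h
  · exact harc _ h
  · exact (harc _ h).symm

/-- Every bipartite graph admits an additive coloring from any lists of `d⁺_D(v) + 1`
positive integers, for any orientation `D`. -/
theorem additive_coloring_bipartite {V : Type*} [Fintype V] [DecidableEq V]
    (G : SimpleGraph V) [DecidableRel G.Adj] (hbip : G.Colorable 2)
    (A : Finset (V × V)) (hA : IsOrientation G A)
    (L : V → Finset ℕ) (hpos : ∀ v, ∀ k ∈ L v, 0 < k)
    (hL : ∀ v, (L v).card = outDeg A v + 1) :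
    ∃ ℓ : V → ℕ, (∀ v, ℓ v ∈ L v) ∧ IsAdditiveColoring G ℓ :=
  additive_coloring_bipartite_general G hbip A hA L hL
end

section
/- If a digraph D' has an odd directed cycle built from γ-paths of W(D) as in the construction W(D) of an orientation D of a graph G, then G contains a closed walk of odd length, and hence an odd cycle. More precisely: if W(D) contains a directed cycle of odd length, then G contains an odd cycle. -/
open Finset MvPolynomial

/-!
If `G` had no odd cycle, it would have no closed walk of odd length and hence a proper
2-colouring `col` with values in `ZMod 2`. Colouring `x*` by `col x + 1`, `x^{vw}` by `col x` and
`y^{vw}_x` by `col w` (`w` is the middle vertex of the walk `v w x`) makes the colour flip along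
every arc of `W(D)`, which is impossible around a directed cycle of odd length.
-/

namespace SimpleGraph.Walk

variable {V : Type*} {G : SimpleGraph V}

lemma exists_loop_of_not_isPath {u v : V} (p : G.Walk u v) (hp : ¬p.IsPath) :
    ∃ (x : V) (c : G.Walk x x) (q : G.Walk u v),
      0 < c.length ∧ q.length + c.length = p.length := by
  classical
  induction p with
  | nil => exact absurd IsPath.nil hp
  | @cons u z v h p ih =>
    by_cases hpath : p.IsPath
    · have hu : u ∈ p.support := by
        by_contra hu
        exact hp (hpath.cons hu)
      refine ⟨u, cons h (p.takeUntil u hu), p.dropUntil u hu, by simp, ?_⟩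
      have hsplit := congrArg length (p.take_spec hu)
      rw [length_append] at hsplit
      simp only [length_cons]
      omega
    · obtain ⟨x, c, q, hc, hlen⟩ := ih hpath
      exact ⟨x, c, cons h q, hc, by simp only [length_cons]; omega⟩

lemma exists_isCycle_odd_length_of_odd_length {u : V} (w : G.Walk u u)
    (hw : Odd w.length) : ∃ (v : V) (C : G.Walk v v), C.IsCycle ∧ Odd C.length := by
  induction hn : w.length using Nat.strong_induction_on generalizing u with
  | _ n ih =>
    subst hn
    cases w with
    | nil => simp at hw
    | @cons _ x _ h p =>
      by_cases hp : p.IsPath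
      · refine ⟨u, cons h p,
          isCycle_iff_isPath_tail_and_le_length.mpr ⟨by simpa using hp, ?_⟩, hw⟩
        -- `p` is not `nil` because `h` is not a loop
        have hp0 : p.length ≠ 0 := fun h0 => (eq_of_length_eq_zero h0 ▸ h).ne rfl
        obtain ⟨k, hk⟩ := hw
        simp only [length_cons] at hk ⊢
        omega
      · obtain ⟨y, c, q, hc, hlen⟩ := p.exists_loop_of_not_isPath hp
        have hsplit : (cons h p).length = (cons h q).length + c.length := by
          simp only [length_cons]; omega
        rcases Nat.even_or_odd c.length with heven | hodd
        · exact ih _ (by simp only [length_cons]; omega) (cons h q)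
            ((Nat.odd_add.mp (hsplit ▸ hw)).mpr heven) rfl
        · exact ih _ (by simp only [length_cons]; omega) c hodd rfl

end SimpleGraph.Walk

lemma SimpleGraph.Coloring.eq_add_one_of_adj {V : Type*} {G : SimpleGraph V}
    (col : G.Coloring (ZMod 2)) {u v : V} (h : G.Adj u v) : col v = col u + 1 := by
  have hne := col.valid h
  generalize col u = a, col v = b at hne ⊢
  revert a b; decide

lemma HasDicycleLen.even_of_flip {α : Type*} {H : Finset (α × α)} {n : ℕ}
    (φ : α → ZMod 2) (hφ : ∀ p ∈ H, φ p.2 = φ p.1 + 1) (hH : HasDicycleLen H n) :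
    Even n := by
  obtain ⟨-, c, -, hc⟩ := hH
  have hstep : ∀ k : ℕ, φ (c k) = φ (c 0) + k := by
    intro k
    induction k with
    | zero => simp
    | succ k ih => rw [Nat.cast_succ, hφ _ (hc k), ih, Nat.cast_succ, add_assoc]
  have := hstep n
  rw [ZMod.natCast_self, left_eq_add] at this
  exact ZMod.natCast_eq_zero_iff_even.mp this

def liftParity {V : Type*} (f : V → ZMod 2) : WV V → ZMod 2
  | Sum.inl x => f x + 1
  | Sum.inr (Sum.inl (_, x)) => f x
  | Sum.inr (Sum.inr ((_, w), _)) => f w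

lemma liftParity_flip_of_mem_WArcSet {V : Type*} [Fintype V] [DecidableEq V]
    {G : SimpleGraph V} {A : Finset (V × V)} (hA : IsOrientation G A) (col : G.Coloring (ZMod 2))
    {p : WV V × WV V} (hp : p ∈ WArcSet A) : liftParity col p.2 = liftParity col p.1 + 1 := by
  have adj_of_mem_nbr : ∀ {v x}, x ∈ nbr A v → G.Adj v x := fun hx =>
    (hA.1 _ _).mpr (by simpa [nbr] using hx)
  simp only [WArcSet, Finset.mem_union, Finset.mem_image, Finset.mem_biUnion, Finset.mem_sdiff]
    at hp
  rcases hp with ((((⟨e, -, rfl⟩ | ⟨e, -, x, hx, rfl⟩) | ⟨e, he, x, -, rfl⟩) |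
    ⟨e, -, x, hx, rfl⟩) | ⟨e, -, x, -, rfl⟩)
  · simp [liftParity, vstar, vsec, add_assoc, CharTwo.add_self_eq_zero]
  · exact col.eq_add_one_of_adj (adj_of_mem_nbr hx.1)
  · exact col.eq_add_one_of_adj ((hA.1 _ _).mpr (Or.inl he))
  · exact col.eq_add_one_of_adj (adj_of_mem_nbr hx.1)
  · simp [liftParity, vstar, vsec]

/-- If `W(D)` contains a directed cycle of odd length, then `G` contains an odd cycle. -/
theorem odd_cycle_of_odd_dicycle_in_W {V : Type*} [Fintype V] [DecidableEq V]
    (G : SimpleGraph V) (A : Finset (V × V)) (hA : IsOrientation G A)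
    (hcyc : ∃ n : ℕ, Odd n ∧ HasDicycleLen (WArcSet A) n) :
    ∃ (v : V) (C : G.Walk v v), C.IsCycle ∧ Odd C.length := by
  by_contra hno
  have hbip : G.Colorable 2 := SimpleGraph.two_colorable_iff_forall_loop_even.mpr fun u w =>
    Nat.not_odd_iff_even.mp fun hw => hno (w.exists_isCycle_odd_length_of_odd_length hw)
  obtain ⟨col⟩ := hbip
  obtain ⟨n, hodd, hn⟩ := hcyc
  exact Nat.not_even_iff_odd.mpr hodd
    (hn.even_of_flip (liftParity col) fun _ => liftParity_flip_of_mem_WArcSet hA col)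
end
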